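/- Let B be the sesquilinear form on pairs of complex-valued H³-functions u, v on T² with zero mean, defined by B(u,v) = (μ + iλ)∫∇u·∇v̄ + ∫ b·∇(Δu + u)·∇Δv̄, where λ ∈ ℝ, μ ∈ ℝ, and b is a measurable function with b ≥ b₀ > 0 and b ≤ B₀. If μ ≥ B₀²/(2b₀), then B is coercive with respect to the seminorm ‖∇Δu‖_{L₂}: Re B(u,u) ≥ (b₀/2)‖∇Δu‖²_{L₂} for all u. -/

import Mathlib

open MeasureTheory

/-- Partial derivative in the first variable (complex-valued). -/
noncomputable def cpdθ (f : ℝ → ℝ → ℂ) : ℝ → ℝ → ℂ := fun θ ζ => deriv (fun x => f x ζ) θ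

/-- Partial derivative in the second variable (complex-valued). -/
noncomputable def cpdζ (f : ℝ → ℝ → ℂ) : ℝ → ℝ → ℂ := fun θ ζ => deriv (fun y => f θ y) ζ

/-- The standard Laplacian on functions of `(θ,ζ)`. -/
noncomputable def clapl (f : ℝ → ℝ → ℂ) : ℝ → ℝ → ℂ :=
  fun θ ζ => cpdθ (cpdθ f) θ ζ + cpdζ (cpdζ f) θ ζ

/-- The fundamental domain `[0,2π]²` of the torus. -/
noncomputable def torusDom : Set (ℝ × ℝ) :=
  Set.Icc (0 : ℝ) (2 * Real.pi) ×ˢ Set.Icc (0 : ℝ) (2 * Real.pi)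

/-!
The estimate holds pointwise before integration. At a point, write `z = ∇u`, `w = ∇Δu` and
`β = b(p) ∈ [b₀, B₀]`. Then `Re (β (w + z)·w̄) ≥ b₀|w|² - B₀|z||w|`, and Young's inequality
`B₀|z||w| ≤ μ|z|² + (B₀²/(4μ))|w|²` with `B₀²/(4μ) ≤ b₀/2` absorbs the cross term. The `λ`-term
contributes nothing to the real part because `∫ |∇u|²` is real.
-/

open ComplexConjugate

lemma mul_mul_le_mul_sq_add_div_mul_sq {μ : ℝ} (hμ : 0 < μ) (B a c : ℝ) :
    B * (a * c) ≤ μ * a ^ 2 + B ^ 2 / (4 * μ) * c ^ 2 := by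
  have h : μ * a ^ 2 + B ^ 2 / (4 * μ) * c ^ 2 - B * (a * c) =
      (2 * μ * a - B * c) ^ 2 / (4 * μ) := by
    field_simp
    ring
  linarith [div_nonneg (sq_nonneg (2 * μ * a - B * c)) (by positivity : (0 : ℝ) ≤ 4 * μ)]

lemma Complex.neg_norm_mul_norm_le_re_mul_conj (z w : ℂ) : -(‖z‖ * ‖w‖) ≤ (z * conj w).re :=
  calc -(‖z‖ * ‖w‖) = -‖z * conj w‖ := by rw [norm_mul, Complex.norm_conj]
    _ ≤ (z * conj w).re := neg_le_of_abs_le (Complex.abs_re_le_norm _)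

lemma coercivity_pointwise {μ b₀ B₀ β : ℝ} (hb₀ : 0 < b₀) (hβl : b₀ ≤ β) (hβu : β ≤ B₀)
    (hμ : B₀ ^ 2 ≤ 2 * b₀ * μ) (z w : ℂ) :
    b₀ / 2 * ‖w‖ ^ 2 ≤ μ * ‖z‖ ^ 2 + ((β : ℂ) * ((w + z) * conj w)).re := by
  have hμ₀ : 0 < μ := by nlinarith
  have hre : ((β : ℂ) * ((w + z) * conj w)).re = β * ‖w‖ ^ 2 + β * (z * conj w).re := by
    rw [Complex.re_ofReal_mul, add_mul, Complex.add_re, Complex.mul_conj', mul_add]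
    norm_cast
  have hcs := Complex.neg_norm_mul_norm_le_re_mul_conj z w
  have hyoung := mul_mul_le_mul_sq_add_div_mul_sq hμ₀ B₀ ‖z‖ ‖w‖
  have hB₀ : B₀ ^ 2 / (4 * μ) ≤ b₀ / 2 := by
    rw [div_le_iff₀ (by positivity)]
    linarith
  rw [hre]
  linarith [mul_le_mul_of_nonneg_left hcs (hb₀.le.trans hβl),
    mul_nonneg (sub_nonneg.2 hβu) (mul_nonneg (norm_nonneg z) (norm_nonneg w)),
    mul_nonneg (sub_nonneg.2 hβl) (sq_nonneg ‖w‖),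
    mul_le_mul_of_nonneg_right hB₀ (sq_nonneg ‖w‖)]

section PartialDerivatives

variable {f g : ℝ → ℝ → ℂ}

lemma hasDerivAt_cpdθ (hf : Differentiable ℝ (fun p : ℝ × ℝ => f p.1 p.2)) (θ ζ : ℝ) :
    HasDerivAt (fun x => f x ζ) (fderiv ℝ (fun p : ℝ × ℝ => f p.1 p.2) (θ, ζ) (1, 0)) θ :=
  (hf (θ, ζ)).hasFDerivAt.comp_hasDerivAt (x := θ) (f := fun x => (x, ζ))
    ((hasDerivAt_id θ).prodMk (hasDerivAt_const θ ζ))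

lemma hasDerivAt_cpdζ (hf : Differentiable ℝ (fun p : ℝ × ℝ => f p.1 p.2)) (θ ζ : ℝ) :
    HasDerivAt (fun y => f θ y) (fderiv ℝ (fun p : ℝ × ℝ => f p.1 p.2) (θ, ζ) (0, 1)) ζ :=
  (hf (θ, ζ)).hasFDerivAt.comp_hasDerivAt (x := ζ) (f := fun y => (θ, y))
    ((hasDerivAt_const ζ θ).prodMk (hasDerivAt_id ζ))

lemma cpdθ_add (hf : Differentiable ℝ (fun p : ℝ × ℝ => f p.1 p.2))
    (hg : Differentiable ℝ (fun p : ℝ × ℝ => g p.1 p.2)) (θ ζ : ℝ) :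
    cpdθ (fun x y => f x y + g x y) θ ζ = cpdθ f θ ζ + cpdθ g θ ζ :=
  ((hasDerivAt_cpdθ hf θ ζ).add (hasDerivAt_cpdθ hg θ ζ)).deriv.trans
    (congrArg₂ _ (hasDerivAt_cpdθ hf θ ζ).deriv (hasDerivAt_cpdθ hg θ ζ).deriv).symm

lemma cpdζ_add (hf : Differentiable ℝ (fun p : ℝ × ℝ => f p.1 p.2))
    (hg : Differentiable ℝ (fun p : ℝ × ℝ => g p.1 p.2)) (θ ζ : ℝ) :
    cpdζ (fun x y => f x y + g x y) θ ζ = cpdζ f θ ζ + cpdζ g θ ζ :=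
  ((hasDerivAt_cpdζ hf θ ζ).add (hasDerivAt_cpdζ hg θ ζ)).deriv.trans
    (congrArg₂ _ (hasDerivAt_cpdζ hf θ ζ).deriv (hasDerivAt_cpdζ hg θ ζ).deriv).symm

variable {n : WithTop ℕ∞}

lemma contDiff_cpdθ (hf : ContDiff ℝ (n + 1) (fun p : ℝ × ℝ => f p.1 p.2)) :
    ContDiff ℝ n (fun p : ℝ × ℝ => cpdθ f p.1 p.2) := by
  have h : (fun p : ℝ × ℝ => cpdθ f p.1 p.2) =
      fun p => fderiv ℝ (fun p : ℝ × ℝ => f p.1 p.2) p (1, 0) :=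
    funext fun p => (hasDerivAt_cpdθ (hf.differentiable (by simp)) p.1 p.2).deriv
  rw [h]
  exact (hf.fderiv_right le_rfl).clm_apply contDiff_const

lemma contDiff_cpdζ (hf : ContDiff ℝ (n + 1) (fun p : ℝ × ℝ => f p.1 p.2)) :
    ContDiff ℝ n (fun p : ℝ × ℝ => cpdζ f p.1 p.2) := by
  have h : (fun p : ℝ × ℝ => cpdζ f p.1 p.2) =
      fun p => fderiv ℝ (fun p : ℝ × ℝ => f p.1 p.2) p (0, 1) :=
    funext fun p => (hasDerivAt_cpdζ (hf.differentiable (by simp)) p.1 p.2).deriv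
  rw [h]
  exact (hf.fderiv_right le_rfl).clm_apply contDiff_const

lemma contDiff_clapl (hf : ContDiff ℝ (n + 1 + 1) (fun p : ℝ × ℝ => f p.1 p.2)) :
    ContDiff ℝ n (fun p : ℝ × ℝ => clapl f p.1 p.2) :=
  (contDiff_cpdθ (contDiff_cpdθ hf)).add (contDiff_cpdζ (contDiff_cpdζ hf))

end PartialDerivatives

section Integral

variable {X : Type*} [MeasurableSpace X] {ν : Measure X} {s : Set X}

lemma setIntegral_mul_conj_add_mul_conj (z₁ z₂ : X → ℂ) :
    ∫ p in s, (z₁ p * conj (z₁ p) + z₂ p * conj (z₂ p)) ∂ν =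
      ((∫ p in s, (‖z₁ p‖ ^ 2 + ‖z₂ p‖ ^ 2) ∂ν : ℝ) : ℂ) := by
  rw [← integral_complex_ofReal]
  simp only [Complex.mul_conj', Complex.ofReal_add, Complex.ofReal_pow]

variable [TopologicalSpace X] [T2Space X] [OpensMeasurableSpace X] [IsFiniteMeasureOnCompacts ν]

lemma re_setIntegral_coercive (lam : ℝ) {μ b₀ B₀ : ℝ} {b : X → ℝ} (hs : IsCompact s)
    (hb₀ : 0 < b₀) (hbl : ∀ p ∈ s, b₀ ≤ b p) (hbu : ∀ p ∈ s, b p ≤ B₀) (hbm : Measurable b)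
    (hμ : B₀ ^ 2 ≤ 2 * b₀ * μ) {z₁ z₂ w₁ w₂ : X → ℂ} (hz₁ : ContinuousOn z₁ s)
    (hz₂ : ContinuousOn z₂ s) (hw₁ : ContinuousOn w₁ s) (hw₂ : ContinuousOn w₂ s) :
    b₀ / 2 * ∫ p in s, (‖w₁ p‖ ^ 2 + ‖w₂ p‖ ^ 2) ∂ν ≤
      (((μ : ℂ) + lam * Complex.I) * ∫ p in s, (z₁ p * conj (z₁ p) + z₂ p * conj (z₂ p)) ∂ν +
        ∫ p in s, (b p : ℂ) * ((w₁ p + z₁ p) * conj (w₁ p) + (w₂ p + z₂ p) * conj (w₂ p))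
          ∂ν).re := by
  have hG : IntegrableOn
      (fun p => (w₁ p + z₁ p) * conj (w₁ p) + (w₂ p + z₂ p) * conj (w₂ p)) s ν :=
    (((hw₁.add hz₁).mul (Complex.continuous_conj.comp_continuousOn hw₁)).add
      ((hw₂.add hz₂).mul (Complex.continuous_conj.comp_continuousOn hw₂))).integrableOn_compact hs
  set F : X → ℂ := fun p => (b p : ℂ) *
    ((w₁ p + z₁ p) * conj (w₁ p) + (w₂ p + z₂ p) * conj (w₂ p))
  have hF : IntegrableOn F s ν := by
    refine hG.bdd_mul (c := B₀) hbm.complex_ofReal.aestronglyMeasurable ?_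
    filter_upwards [ae_restrict_mem hs.measurableSet] with p hp
    rw [Complex.norm_real, Real.norm_of_nonneg (hb₀.le.trans (hbl p hp))]
    exact hbu p hp
  have hz : IntegrableOn (fun p => ‖z₁ p‖ ^ 2 + ‖z₂ p‖ ^ 2) s ν :=
    ((hz₁.norm.pow 2).add (hz₂.norm.pow 2)).integrableOn_compact hs
  have hw : IntegrableOn (fun p => ‖w₁ p‖ ^ 2 + ‖w₂ p‖ ^ 2) s ν :=
    ((hw₁.norm.pow 2).add (hw₂.norm.pow 2)).integrableOn_compact hs
  have hFre : IntegrableOn (fun p => (F p).re) s ν := hF.re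
  have hreF : (∫ p in s, F p ∂ν).re = ∫ p in s, (F p).re ∂ν := (integral_re hF).symm
  rw [setIntegral_mul_conj_add_mul_conj, Complex.add_re, Complex.re_mul_ofReal, hreF]
  simp only [Complex.add_re, Complex.ofReal_re, Complex.mul_re, Complex.ofReal_im,
    Complex.I_re, Complex.I_im, mul_zero, mul_one, sub_zero, add_zero]
  rw [← integral_const_mul, ← integral_const_mul, ← integral_add (hz.const_mul μ) hFre]
  refine setIntegral_mono_on (hw.const_mul _) ((hz.const_mul μ).add hFre) hs.measurableSet
    fun p hp => ?_
  have h₁ := coercivity_pointwise hb₀ (hbl p hp) (hbu p hp) hμ (z₁ p) (w₁ p)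
  have h₂ := coercivity_pointwise hb₀ (hbl p hp) (hbu p hp) hμ (z₂ p) (w₂ p)
  simp only [F, mul_add, Complex.add_re] at h₁ h₂ ⊢
  linarith

end Integral

theorem stmt19_general (lam μ b₀ B₀ : ℝ) (b : ℝ × ℝ → ℝ)
    (hb₀ : 0 < b₀) (hbl : ∀ p : ℝ × ℝ, b₀ ≤ b p) (hbu : ∀ p : ℝ × ℝ, b p ≤ B₀)
    (hbm : Measurable b)
    (hμ : B₀ ^ 2 / (2 * b₀) ≤ μ)
    (u : ℝ → ℝ → ℂ)
    (hu : ContDiff ℝ 3 (fun p : ℝ × ℝ => u p.1 p.2)) :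
    (((μ : ℂ) + (lam : ℂ) * Complex.I) *
        (∫ p in torusDom,
          (cpdθ u p.1 p.2 * starRingEnd ℂ (cpdθ u p.1 p.2) +
            cpdζ u p.1 p.2 * starRingEnd ℂ (cpdζ u p.1 p.2))) +
      (∫ p in torusDom,
        ((b p : ℂ) *
          (cpdθ (fun x y => clapl u x y + u x y) p.1 p.2 *
              starRingEnd ℂ (cpdθ (clapl u) p.1 p.2) +
            cpdζ (fun x y => clapl u x y + u x y) p.1 p.2 *
              starRingEnd ℂ (cpdζ (clapl u) p.1 p.2))))).re ≥
    b₀ / 2 *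
      ∫ p in torusDom,
        (‖cpdθ (clapl u) p.1 p.2‖ ^ 2 + ‖cpdζ (clapl u) p.1 p.2‖ ^ 2) := by
  have hu₁ : ContDiff ℝ (0 + 1) (fun p : ℝ × ℝ => u p.1 p.2) := hu.of_le (by norm_num)
  have hΔu : ContDiff ℝ (0 + 1) (fun p : ℝ × ℝ => clapl u p.1 p.2) := contDiff_clapl hu
  have hμ' : B₀ ^ 2 ≤ 2 * b₀ * μ := (div_le_iff₀' (by positivity)).1 hμ
  simp only [cpdθ_add (hΔu.differentiable (by simp)) (hu₁.differentiable (by simp)),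
    cpdζ_add (hΔu.differentiable (by simp)) (hu₁.differentiable (by simp))]
  exact re_setIntegral_coercive lam (isCompact_Icc.prod isCompact_Icc) hb₀ (fun p _ => hbl p)
    (fun p _ => hbu p) hbm hμ' (contDiff_cpdθ hu₁).continuous.continuousOn
    (contDiff_cpdζ hu₁).continuous.continuousOn (contDiff_cpdθ hΔu).continuous.continuousOn
    (contDiff_cpdζ hΔu).continuous.continuousOn

/-- Coercivity of the sesquilinear form
`B(u,v) = (μ + iλ)∫ ∇u·∇v̄ + ∫ b ∇(Δu + u)·∇Δv̄` for `μ ≥ B₀²/(2b₀)`: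
`Re B(u,u) ≥ (b₀/2)‖∇Δu‖²_{L₂}` for every zero-mean `H³` (here `C³`,
doubly `2π`-periodic) complex-valued function `u` on the torus. -/
theorem stmt19 (lam μ b₀ B₀ : ℝ) (b : ℝ × ℝ → ℝ)
    (hb₀ : 0 < b₀) (hbl : ∀ p : ℝ × ℝ, b₀ ≤ b p) (hbu : ∀ p : ℝ × ℝ, b p ≤ B₀)
    (hbm : Measurable b)
    (hμ : B₀ ^ 2 / (2 * b₀) ≤ μ)
    (u : ℝ → ℝ → ℂ)
    (hu : ContDiff ℝ 3 (fun p : ℝ × ℝ => u p.1 p.2))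
    (hper1 : ∀ x y : ℝ, u (x + 2 * Real.pi) y = u x y)
    (hper2 : ∀ x y : ℝ, u x (y + 2 * Real.pi) = u x y)
    (hmean : (∫ p in torusDom, u p.1 p.2) = 0) :
    (((μ : ℂ) + (lam : ℂ) * Complex.I) *
        (∫ p in torusDom,
          (cpdθ u p.1 p.2 * starRingEnd ℂ (cpdθ u p.1 p.2) +
            cpdζ u p.1 p.2 * starRingEnd ℂ (cpdζ u p.1 p.2))) +
      (∫ p in torusDom,
        ((b p : ℂ) *
          (cpdθ (fun x y => clapl u x y + u x y) p.1 p.2 *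
              starRingEnd ℂ (cpdθ (clapl u) p.1 p.2) +
            cpdζ (fun x y => clapl u x y + u x y) p.1 p.2 *
              starRingEnd ℂ (cpdζ (clapl u) p.1 p.2))))).re ≥
    b₀ / 2 *
      ∫ p in torusDom,
        (‖cpdθ (clapl u) p.1 p.2‖ ^ 2 + ‖cpdζ (clapl u) p.1 p.2‖ ^ 2) :=
  stmt19_general lam μ b₀ B₀ b hb₀ hbl hbu hbm hμ u hu
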